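/- arXiv:1506.04725 — 3 statements merged into one kernel-verified Lean document; each statement's English description precedes it below -/
import Mathlib

section
/- For w > 0, the function f_w(t) = max(1 - w·|t|, 0) is a characteristic function of some probability measure on ℝ (Polya's criterion instance): there exists a probability measure P_w on ℝ whose characteristic function equals f_w. -/
/-!
The tent `u ↦ max (1 - b|u|) 0` is continuous, integrable and even, and a direct computation shows
that its Fourier transform is the nonnegative integrable function `ξ ↦ sinc (πξ/b)² / b`. Fourier
inversion then exhibits the tent as the characteristic function of the measure with this density,
and its total mass is the value of the tent at `0`, namely `1`. The choice `b = 2πw` absorbs the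
`2π` in the normalisation `e^{-2πixξ}` of Mathlib's Fourier transform.
-/

open MeasureTheory Complex

open Real FourierTransform

lemma fourier_ofReal_of_even {f : ℝ → ℝ} (hf : Integrable f) (heven : ∀ v, f (-v) = f v)
    (ξ : ℝ) : 𝓕 (fun v => (f v : ℂ)) ξ = ((∫ v, Real.cos (2 * π * ξ * v) * f v : ℝ) : ℂ) := by
  have hodd : ∫ v, Real.sin (2 * π * ξ * v) * f v = 0 := by
    have := integral_neg_eq_self (fun v => Real.sin (2 * π * ξ * v) * f v) volume
    simp only [mul_neg, Real.sin_neg, heven, neg_mul, integral_neg] at this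
    linarith
  have hcos : Integrable fun v => ((Real.cos (2 * π * ξ * v) * f v : ℝ) : ℂ) :=
    (hf.bdd_mul (by fun_prop) (.of_forall fun v => Real.abs_cos_le_one _)).ofReal
  have hsin : Integrable fun v => ((Real.sin (2 * π * ξ * v) * f v : ℝ) : ℂ) * I :=
    (hf.bdd_mul (by fun_prop) (.of_forall fun v => Real.abs_sin_le_one _)).ofReal.mul_const I
  calc 𝓕 (fun v => (f v : ℂ)) ξ
      = ∫ v, ((Real.cos (2 * π * ξ * v) * f v : ℝ) : ℂ)
          - ((Real.sin (2 * π * ξ * v) * f v : ℝ) : ℂ) * I := by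
        rw [Real.fourier_real_eq_integral_exp_smul]
        congr 1 with v
        rw [smul_eq_mul, show (↑(-2 * π * v * ξ) : ℂ) = ((-(2 * π * ξ * v) : ℝ) : ℂ) by
          push_cast; ring, exp_mul_I]
        push_cast
        rw [Complex.cos_neg, Complex.sin_neg]
        ring
    _ = ((∫ v, Real.cos (2 * π * ξ * v) * f v : ℝ) : ℂ) := by
        rw [integral_sub hcos hsin, integral_mul_const,
          integral_complex_ofReal, integral_complex_ofReal, hodd]
        simp

lemma charFun_withDensity_of_fourier_eq {f : ℝ → ℂ} {g : ℝ → ℝ} (hf : Continuous f)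
    (hfi : Integrable f) (hg : Integrable g) (hg0 : ∀ x, 0 ≤ g x)
    (hfg : 𝓕 f = fun ξ => (g ξ : ℂ)) (t : ℝ) :
    charFun (volume.withDensity fun x => ENNReal.ofReal (g x)) t = f ((2 * π)⁻¹ * t) := by
  have hinv : 𝓕⁻ (𝓕 f) = f := hf.fourierInv_fourier_eq hfi (by rw [hfg]; exact hg.ofReal)
  rw [charFun_apply_real, integral_withDensity_eq_integral_toReal_smul₀
    hg.aemeasurable.ennreal_ofReal (.of_forall fun _ => ENNReal.ofReal_lt_top), ← hinv,
    Real.fourierInv_eq', hfg]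
  congr 1 with x
  have harg : 2 * π * inner ℝ x ((2 * π)⁻¹ * t) = t * x := by
    rw [Real.inner_apply]
    field_simp
  rw [ENNReal.toReal_ofReal (hg0 x), harg, Complex.real_smul, smul_eq_mul, mul_comm]
  push_cast
  ring

lemma sq_mul_sinc_sq (x : ℝ) : x ^ 2 * sinc x ^ 2 = Real.sin x ^ 2 := by
  rcases eq_or_ne x 0 with rfl | hx
  · simp
  · rw [sinc_of_ne_zero hx]
    field_simp

lemma integrable_sinc_sq : Integrable fun x : ℝ => sinc x ^ 2 := by
  refine (integrable_inv_one_add_sq.const_mul 2).mono' (by fun_prop) (.of_forall fun x => ?_)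
  have hsinc : sinc x ^ 2 ≤ 1 := (sq_le_one_iff_abs_le_one _).mpr (abs_sinc_le_one x)
  rw [Real.norm_of_nonneg (sq_nonneg _), ← div_eq_mul_inv, le_div_iff₀ (by positivity)]
  nlinarith [sq_mul_sinc_sq x, sin_sq_le_one x]

lemma integral_one_sub_mul_mul_cos {b : ℝ} (hb : b ≠ 0) (c : ℝ) :
    ∫ x in (0 : ℝ)..b⁻¹, (1 - b * x) * Real.cos (c * x) = sinc (c / (2 * b)) ^ 2 / (2 * b) := by
  rcases eq_or_ne c 0 with rfl | hc
  · simp only [zero_mul, Real.cos_zero, mul_one, zero_div, sinc_zero]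
    rw [intervalIntegral.integral_sub intervalIntegrable_const
      ((continuous_const_mul b).intervalIntegrable _ _), intervalIntegral.integral_const_mul]
    simp only [intervalIntegral.integral_const, integral_id, smul_eq_mul, sub_zero, mul_one]
    field_simp
    ring
  · have hF : ∀ x, HasDerivAt
        (fun x => (1 - b * x) * Real.sin (c * x) / c - b * Real.cos (c * x) / c ^ 2)
        ((1 - b * x) * Real.cos (c * x)) x := by
      intro x
      have hcx : HasDerivAt (fun x => c * x) c x := by simpa using (hasDerivAt_id x).const_mul c
      have hlin : HasDerivAt (fun x => 1 - b * x) (-b) x := by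
        simpa using ((hasDerivAt_id x).const_mul b).const_sub 1
      refine (((hlin.mul hcx.sin).div_const c).sub
        ((hcx.cos.const_mul b).div_const (c ^ 2))).congr_deriv ?_
      field_simp
      ring
    rw [intervalIntegral.integral_eq_sub_of_hasDerivAt (fun x _ => hF x)
      (by apply Continuous.intervalIntegrable; fun_prop),
      sinc_of_ne_zero (by positivity), div_pow, sin_sq_eq_half_sub,
      show 2 * (c / (2 * b)) = c * b⁻¹ by field_simp]
    field_simp
    simp only [mul_zero, mul_one, Real.sin_zero, Real.cos_zero, sub_zero]
    ring

noncomputable def tent (b u : ℝ) : ℝ := max (1 - b * |u|) 0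

lemma tent_zero (b : ℝ) : tent b 0 = 1 := by simp [tent]

lemma tent_neg (b u : ℝ) : tent b (-u) = tent b u := by simp [tent]

lemma tent_mul_inv_mul {c : ℝ} (hc : 0 < c) (b u : ℝ) : tent (c * b) (c⁻¹ * u) = tent b u := by
  rw [tent, tent, abs_mul, abs_inv, abs_of_pos hc]
  field_simp

lemma tent_of_le {b x : ℝ} (hb : 0 < b) (h0 : 0 ≤ x) (h1 : x ≤ b⁻¹) : tent b x = 1 - b * x := by
  rw [tent, abs_of_nonneg h0, max_eq_left]
  have := mul_le_mul_of_nonneg_left h1 hb.le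
  rw [mul_inv_cancel₀ hb.ne'] at this
  linarith

lemma tent_of_inv_le_abs {b x : ℝ} (hb : 0 < b) (h : b⁻¹ ≤ |x|) : tent b x = 0 := by
  rw [tent, max_eq_right]
  have := mul_le_mul_of_nonneg_left h hb.le
  rw [mul_inv_cancel₀ hb.ne'] at this
  linarith

@[fun_prop]
lemma continuous_tent (b : ℝ) : Continuous (tent b) := by
  unfold tent
  fun_prop

lemma hasCompactSupport_tent {b : ℝ} (hb : 0 < b) : HasCompactSupport (tent b) :=
  HasCompactSupport.intro (isCompact_closedBall 0 b⁻¹) fun x hx =>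
    tent_of_inv_le_abs hb (by simpa using (not_le.mp (mt mem_closedBall_zero_iff.mpr hx)).le)

lemma integrable_tent {b : ℝ} (hb : 0 < b) : Integrable (tent b) :=
  (continuous_tent b).integrable_of_hasCompactSupport (hasCompactSupport_tent hb)

lemma integral_cos_mul_tent {b : ℝ} (hb : 0 < b) (c : ℝ) :
    ∫ v, Real.cos (c * v) * tent b v = sinc (c / (2 * b)) ^ 2 / b := by
  have hsupp : ∀ x ∈ Set.Ioi (0 : ℝ) \ Set.Ioc 0 b⁻¹, Real.cos (c * x) * tent b x = 0 := by
    rintro x ⟨hx0, hx⟩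
    simp only [Set.mem_Ioi, Set.mem_Ioc, not_and, not_le] at hx0 hx
    rw [tent_of_inv_le_abs hb ((hx hx0).le.trans (le_abs_self x)), mul_zero]
  have hcongr : ∀ x ∈ Set.uIcc 0 b⁻¹,
      Real.cos (c * x) * tent b x = (1 - b * x) * Real.cos (c * x) := by
    intro x hx
    rw [Set.uIcc_of_le (by positivity)] at hx
    rw [tent_of_le hb hx.1 hx.2, mul_comm]
  calc ∫ v, Real.cos (c * v) * tent b v
      = 2 * ∫ x in Set.Ioi 0, Real.cos (c * x) * tent b x := by
        rw [← integral_comp_abs (f := fun x => Real.cos (c * x) * tent b x)]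
        congr 1 with v
        rcases abs_choice v with h | h <;> simp [h, tent_neg]
    _ = 2 * ∫ x in (0 : ℝ)..b⁻¹, (1 - b * x) * Real.cos (c * x) := by
        rw [setIntegral_eq_of_subset_of_forall_sdiff_eq_zero measurableSet_Ioi
          Set.Ioc_subset_Ioi_self hsupp, ← intervalIntegral.integral_of_le (by positivity),
          intervalIntegral.integral_congr hcongr]
    _ = sinc (c / (2 * b)) ^ 2 / b := by
        rw [integral_one_sub_mul_mul_cos hb.ne']
        field_simp

/-- Equal to `b (1 - cos (2πx/b)) / (2π²x²)` for `x ≠ 0`; the `sinc` form needs no case at `0`. -/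
noncomputable def polyaDensity (b x : ℝ) : ℝ := sinc (π * x / b) ^ 2 / b

lemma polyaDensity_nonneg {b : ℝ} (hb : 0 ≤ b) (x : ℝ) : 0 ≤ polyaDensity b x := by
  unfold polyaDensity
  positivity

lemma integrable_polyaDensity {b : ℝ} (hb : b ≠ 0) : Integrable (polyaDensity b) :=
  ((integrable_sinc_sq.comp_div hb).comp_mul_left' pi_ne_zero).div_const b

lemma fourier_tent {b : ℝ} (hb : 0 < b) :
    𝓕 (fun v => (tent b v : ℂ)) = fun ξ => (polyaDensity b ξ : ℂ) := by
  ext ξ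
  rw [fourier_ofReal_of_even (integrable_tent hb) (tent_neg b), integral_cos_mul_tent hb,
    polyaDensity]
  congr 3
  field_simp

/-- Polya's criterion instance: for `w > 0`, the function `t ↦ max (1 - w·|t|) 0` is the
characteristic function of some probability measure on ℝ. -/
theorem polya_tent_is_charFun (w : ℝ) (hw : 0 < w) :
    ∃ P : Measure ℝ, IsProbabilityMeasure P ∧
      ∀ t : ℝ, (∫ x : ℝ, Complex.exp (t * x * Complex.I) ∂P) = (max (1 - w * |t|) 0 : ℝ) := by
  have hb : 0 < 2 * π * w := by positivity
  set P := volume.withDensity fun x => ENNReal.ofReal (polyaDensity (2 * π * w) x)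
  have hP : ∀ t, charFun P t = tent w t := fun t => by
    rw [charFun_withDensity_of_fourier_eq (f := fun v => (tent (2 * π * w) v : ℂ))
      (by fun_prop) (integrable_tent hb).ofReal (integrable_polyaDensity hb.ne')
      (polyaDensity_nonneg hb.le) (fourier_tent hb), tent_mul_inv_mul (by positivity)]
  refine ⟨P, isProbabilityMeasure_iff_real.mpr ?_, fun t => ?_⟩
  · simpa [tent_zero] using hP 0
  · rw [← charFun_apply_real, hP, tent]
end

section
/- Let Λ be an injective map from a set M of probability measures on ℝᵈ into the set of continuous functions ℝᵈ → ℝ such that for P ≠ Q the function ΛP - ΛQ is analytic and not identically zero. Let T₁,…,T_J be i.i.d. with absolutely continuous law. Define d(P,Q)² = Σ_j |ΛP(T_j) - ΛQ(T_j)|². Then almost surely: d(P,Q) = 0 iff P = Q, d(P,Q) = d(Q,P), and d(P,Q) ≤ d(P,R) + d(R,Q) for any fixed P, Q, R ∈ M. -/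
/-!
The zero set of a nonzero real-analytic function on `ℝᵈ` is Lebesgue-null: on `ℝ` it is
discrete, hence countable, and Fubini's theorem passes from two factors to their product by
slicing through a point where the function does not vanish. As the law of `T₀` is absolutely
continuous, for `P ≠ Q` almost surely `ΛP(T₀) ≠ ΛQ(T₀)`, so `d(P, Q) > 0`. Symmetry and the
triangle inequality hold pointwise, `d` being the Euclidean distance between the vectors
`(ΛP(T_j))_j` in `ℝᴶ`.
-/

open MeasureTheory ProbabilityTheory Set Filter

section AnalyticZeroSets

variable {E F : Type*} [NormedAddCommGroup E] [NormedSpace ℝ E] [MeasurableSpace E]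
  [NormedAddCommGroup F] [NormedSpace ℝ F] [MeasurableSpace F]

def AnalyticZeroSetsNull (μ : Measure E) : Prop :=
  ∀ f : E → ℝ, AnalyticOnNhd ℝ f univ → f ≠ 0 → μ {x | f x = 0} = 0

theorem AnalyticOnNhd.countable_zeroSet {f : ℝ → ℝ} (hf : AnalyticOnNhd ℝ f univ) (hne : f ≠ 0) :
    {x | f x = 0}.Countable := by
  have : DiscreteTopology {x | f x = 0} := by
    rw [discreteTopology_subtype_iff]
    intro x _
    rcases (hf x (mem_univ x)).eventually_eq_zero_or_eventually_ne_zero with h | h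
    · exact absurd (funext fun y => hf.eqOn_zero_of_preconnected_of_eventuallyEq_zero
        isPreconnected_univ (mem_univ x) h (mem_univ y)) hne
    · rwa [inf_principal_eq_bot]
  exact countable_coe_iff.mp (TopologicalSpace.separableSpace_iff_countable.mp inferInstance)

theorem analyticZeroSetsNull_volume_real : AnalyticZeroSetsNull (volume : Measure ℝ) :=
  fun _ hf hne => (hf.countable_zeroSet hne).measure_zero _

theorem AnalyticZeroSetsNull.prod [SecondCountableTopologyEither E F]
    [OpensMeasurableSpace E] [OpensMeasurableSpace F] {μ : Measure E} {ν : Measure F} [SFinite ν]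
    (hμ : AnalyticZeroSetsNull μ) (hν : AnalyticZeroSetsNull ν) :
    AnalyticZeroSetsNull (μ.prod ν) := by
  intro f hf hne
  obtain ⟨⟨x₀, y₀⟩, hf₀⟩ := Function.ne_iff.mp hne
  have hclosed : IsClosed {p : E × F | f p = 0} :=
    isClosed_eq (continuousOn_univ.mp hf.continuousOn) continuous_const
  rw [Measure.measure_prod_null hclosed.measurableSet]
  have hslice : ∀ᵐ x ∂μ, f (x, y₀) ≠ 0 := by
    refine measure_eq_zero_iff_ae_notMem.mp (hμ (fun x => f (x, y₀)) ?_ ?_)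
    · exact hf.comp (analyticOnNhd_id.prod analyticOnNhd_const) (mapsTo_univ _ _)
    · exact Function.ne_iff.mpr ⟨x₀, hf₀⟩
  filter_upwards [hslice] with x hx
  exact hν (fun y => f (x, y)) (hf.comp (analyticOnNhd_const.prod analyticOnNhd_id)
    (mapsTo_univ _ _)) (Function.ne_iff.mpr ⟨y₀, hx⟩)

theorem AnalyticZeroSetsNull.map_continuousLinearEquiv [OpensMeasurableSpace F]
    {μ : Measure E} {ν : Measure F} (hμ : AnalyticZeroSetsNull μ) (e : E ≃L[ℝ] F)
    (he : MeasurePreserving e μ ν) : AnalyticZeroSetsNull ν := by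
  intro f hf hne
  have hclosed : IsClosed {y : F | f y = 0} :=
    isClosed_eq (continuousOn_univ.mp hf.continuousOn) continuous_const
  rw [← he.measure_preimage hclosed.measurableSet.nullMeasurableSet]
  refine hμ (f ∘ e) (hf.comp (e.analyticOnNhd univ) (mapsTo_univ _ _)) fun h => hne ?_
  funext y
  simpa using congrFun h (e.symm y)

end AnalyticZeroSets

theorem analyticZeroSetsNull_volume_pi :
    ∀ n : ℕ, AnalyticZeroSetsNull (volume : Measure (Fin n → ℝ))
  | 0 => fun f _ hne => by
    obtain ⟨x, hx⟩ := Function.ne_iff.mp hne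
    convert measure_empty (μ := (volume : Measure (Fin 0 → ℝ)))
    exact eq_empty_of_forall_notMem fun y hy => hx (Subsingleton.elim x y ▸ hy)
  | n + 1 => by
    have hcons : MeasurePreserving (Fin.consEquivL ℝ fun _ : Fin (n + 1) => ℝ)
        (volume.prod volume) volume := by
      convert (volume_preserving_piFinSuccAbove (fun _ : Fin (n + 1) => ℝ) 0).symm using 1
      · rfl
      · rw [MeasurableEquiv.piFinSuccAbove_symm_apply, Fin.insertNthEquiv_zero]
        rfl
      · exact (Measure.volume_eq_prod _ _).symm
    exact (analyticZeroSetsNull_volume_real.prod (analyticZeroSetsNull_volume_pi n))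
      |>.map_continuousLinearEquiv _ hcons

theorem analyticZeroSetsNull_volume_euclidean (d : ℕ) :
    AnalyticZeroSetsNull (volume : Measure (EuclideanSpace ℝ (Fin d))) :=
  (analyticZeroSetsNull_volume_pi d).map_continuousLinearEquiv
    (EuclideanSpace.equiv (Fin d) ℝ).symm (PiLp.volume_preserving_toLp (Fin d))

theorem sqrt_sum_sq_sub_eq_dist {ι : Type*} [Fintype ι] (x y : ι → ℝ) :
    √(∑ i, (x i - y i) ^ 2) = dist (WithLp.toLp 2 x) (WithLp.toLp 2 y) := by
  simp [EuclideanSpace.dist_eq, Real.dist_eq, sq_abs]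

theorem random_metric_of_analytic_injection_general
    {d : ℕ} {Ω : Type*} [MeasurableSpace Ω] (Pr : Measure Ω)
    (M : Set (Measure (EuclideanSpace ℝ (Fin d))))
    (Λ : Measure (EuclideanSpace ℝ (Fin d)) → EuclideanSpace ℝ (Fin d) → ℝ)
    (hanal : ∀ P ∈ M, ∀ Q ∈ M, P ≠ Q →
      AnalyticOnNhd ℝ (fun x => Λ P x - Λ Q x) Set.univ ∧
      (fun x => Λ P x - Λ Q x) ≠ 0)
    (μ : Measure (EuclideanSpace ℝ (Fin d))) (hμ : μ ≪ volume)
    (J : ℕ) (hJ : 0 < J)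
    (T : Fin J → Ω → EuclideanSpace ℝ (Fin d))
    (hmeas : ∀ j, Measurable (T j))
    (hlaw : ∀ j, Measure.map (T j) Pr = μ)
    (D : Measure (EuclideanSpace ℝ (Fin d)) → Measure (EuclideanSpace ℝ (Fin d)) → Ω → ℝ)
    (hD : ∀ P Q ω, D P Q ω = Real.sqrt (∑ j : Fin J, (Λ P (T j ω) - Λ Q (T j ω)) ^ 2))
    (P Q R : Measure (EuclideanSpace ℝ (Fin d))) (hP : P ∈ M) (hQ : Q ∈ M) :
    ∀ᵐ ω ∂Pr, (D P Q ω = 0 ↔ P = Q) ∧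
      D P Q ω = D Q P ω ∧
      D P Q ω ≤ D P R ω + D R Q ω := by
  set v : Measure (EuclideanSpace ℝ (Fin d)) → Ω → EuclideanSpace ℝ (Fin J) :=
    fun A ω => WithLp.toLp 2 fun j => Λ A (T j ω)
  have hDv : ∀ A B ω, D A B ω = dist (v A ω) (v B ω) := fun A B ω => by
    rw [hD, sqrt_sum_sq_sub_eq_dist]
  have hsep : ∀ᵐ ω ∂Pr, D P Q ω = 0 → P = Q := by
    by_cases hPQ : P = Q
    · exact .of_forall fun _ _ => hPQ
    obtain ⟨hf, hne⟩ := hanal P hP Q hQ hPQ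
    let j₀ : Fin J := ⟨0, hJ⟩
    have hnull := analyticZeroSetsNull_volume_euclidean d _ hf hne
    have hμ_ne : ∀ᵐ x ∂μ, Λ P x - Λ Q x ≠ 0 := hμ.ae_le (measure_eq_zero_iff_ae_notMem.mp hnull)
    rw [← hlaw j₀] at hμ_ne
    filter_upwards [ae_of_ae_map (hmeas j₀).aemeasurable hμ_ne] with ω hω hD0
    rw [hDv, dist_eq_zero] at hD0
    exact absurd (sub_eq_zero.mpr (congrArg (· j₀) hD0)) hω
  filter_upwards [hsep] with ω hω
  refine ⟨⟨hω, fun h => by rw [h, hDv, dist_self]⟩, ?_, ?_⟩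
  · rw [hDv, hDv, dist_comm]
  · simpa only [hDv] using dist_triangle _ _ _

/-- Random-metric lemma: if `Λ` maps a set of probability measures injectively into
analytic functions (differences of distinct images being analytic and not identically
zero), and `T 1, …, T J` are i.i.d. with absolutely continuous law, then the random
quantity `d(P,Q) = (∑ j (ΛP(T j) - ΛQ(T j))²)^½` is almost surely a metric:
`d(P,Q) = 0` iff `P = Q`, symmetry, and the triangle inequality. -/
theorem random_metric_of_analytic_injection
    {d : ℕ} {Ω : Type*} [MeasurableSpace Ω] (Pr : Measure Ω) [IsProbabilityMeasure Pr]
    (M : Set (Measure (EuclideanSpace ℝ (Fin d))))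
    (hMprob : ∀ P ∈ M, IsProbabilityMeasure P)
    (Λ : Measure (EuclideanSpace ℝ (Fin d)) → EuclideanSpace ℝ (Fin d) → ℝ)
    (hinj : ∀ P ∈ M, ∀ Q ∈ M, Λ P = Λ Q → P = Q)
    (hanal : ∀ P ∈ M, ∀ Q ∈ M, P ≠ Q →
      AnalyticOnNhd ℝ (fun x => Λ P x - Λ Q x) Set.univ ∧
      (fun x => Λ P x - Λ Q x) ≠ 0)
    (μ : Measure (EuclideanSpace ℝ (Fin d))) [IsProbabilityMeasure μ] (hμ : μ ≪ volume)
    (J : ℕ) (hJ : 0 < J)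
    (T : Fin J → Ω → EuclideanSpace ℝ (Fin d))
    (hmeas : ∀ j, Measurable (T j))
    (hindep : iIndepFun T Pr)
    (hlaw : ∀ j, Measure.map (T j) Pr = μ)
    (D : Measure (EuclideanSpace ℝ (Fin d)) → Measure (EuclideanSpace ℝ (Fin d)) → Ω → ℝ)
    (hD : ∀ P Q ω, D P Q ω = Real.sqrt (∑ j : Fin J, (Λ P (T j ω) - Λ Q (T j ω)) ^ 2))
    (P Q R : Measure (EuclideanSpace ℝ (Fin d))) (hP : P ∈ M) (hQ : Q ∈ M) (hR : R ∈ M) :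
    ∀ᵐ ω ∂Pr, (D P Q ω = 0 ↔ P = Q) ∧
      D P Q ω = D Q P ω ∧
      D P Q ω ≤ D P R ω + D R Q ω :=
  random_metric_of_analytic_injection_general Pr M Λ hanal μ hμ J hJ T hmeas hlaw D hD P Q R hP hQ
end

section
/- Let k be a translation-invariant kernel k(x,y) = κ(x−y) on ℝ with κ integrable, continuous, and with nonnegative integrable Fourier transform F⁻¹κ. Then for probability measures P, Q with integrable characteristic functions, MMD²(P,Q) := ∫∫ κ(x−y) d(P−Q)(x) d(P−Q)(y) = ∫ |φ_P(t) − φ_Q(t)|² (F⁻¹κ)(t) dt. -/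
/-!
Substituting the Bochner representation `κ(x - y) = ∫ exp(i⟪x - y, t⟫) p(t) dt` into each double
integral and applying Fubini (legitimate because `|exp(i⟪x - y, t⟫)| = 1`, `p` is integrable and
the measures are finite) turns `∫∫ κ(x - y) dμ'(y) dμ(x)` into `∫ φ_μ(t) conj(φ_μ'(t)) p(t) dt`.
The three terms of the MMD then recombine through
`|a - b|² = |a|² + |b|² - 2 Re(a conj b)`.
-/

open MeasureTheory Complex
open scoped RealInnerProductSpace ComplexConjugate

section TranslationInvariantKernel

variable {E : Type*} [NormedAddCommGroup E] [InnerProductSpace ℝ E]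

lemma exp_inner_sub_mul_I (x y t : E) :
    exp (⟪x - y, t⟫ * I) = exp (⟪x, t⟫ * I) * conj (exp (⟪y, t⟫ * I)) := by
  rw [← exp_conj, ← exp_add, inner_sub_left]
  simp [conj_ofReal, sub_eq_add_neg, add_mul]

variable [MeasurableSpace E] [BorelSpace E] [SecondCountableTopology E]
  {ν : Measure E} {κ p : E → ℝ} (hp : Integrable p ν)
  (hκ : ∀ u, (κ u : ℂ) = ∫ t, exp (⟪u, t⟫ * I) * p t ∂ν)

include hp hκ in
lemma integral_kernel_sub_eq_integral_exp_mul_conj_charFun [SFinite ν] (μ : Measure E)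
    [IsFiniteMeasure μ] (x : E) :
    ∫ y, (κ (x - y) : ℂ) ∂μ = ∫ t, exp (⟪x, t⟫ * I) * (conj (charFun μ t) * p t) ∂ν := by
  simp_rw [hκ, exp_inner_sub_mul_I]
  rw [integral_integral_swap]
  · congr 1 with t
    simp_rw [mul_assoc]
    rw [integral_const_mul, integral_mul_const, integral_conj, charFun_apply]
  · refine ((hp.ofReal (𝕜 := ℂ)).comp_snd μ).bdd_mul (c := 1) (by fun_prop)
      (ae_of_all _ fun z => ?_)
    simp [norm_exp_ofReal_mul_I]

include hp in
lemma integrable_conj_charFun_mul (μ : Measure E) [IsFiniteMeasure μ] :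
    Integrable (fun t => conj (charFun μ t) * p t) ν :=
  (hp.ofReal (𝕜 := ℂ)).bdd_mul (c := μ.real Set.univ) (by fun_prop)
    (ae_of_all _ fun t => (RCLike.norm_conj _).trans_le (norm_charFun_le t))

include hp in
lemma integrable_charFun_mul_conj_charFun_mul (μ μ' : Measure E) [IsFiniteMeasure μ]
    [IsFiniteMeasure μ'] :
    Integrable (fun t => charFun μ t * conj (charFun μ' t) * p t) ν := by
  simp_rw [mul_assoc]
  exact (integrable_conj_charFun_mul hp μ').bdd_mul (c := μ.real Set.univ) (by fun_prop)
    (ae_of_all _ norm_charFun_le)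

include hp hκ in
lemma integral_integral_kernel_sub_eq_integral_charFun_mul_conj [SFinite ν] (μ μ' : Measure E)
    [IsFiniteMeasure μ] [IsFiniteMeasure μ'] :
    ∫ x, ∫ y, (κ (x - y) : ℂ) ∂μ' ∂μ = ∫ t, charFun μ t * conj (charFun μ' t) * p t ∂ν := by
  simp_rw [integral_kernel_sub_eq_integral_exp_mul_conj_charFun hp hκ μ']
  rw [integral_integral_swap]
  · congr 1 with t
    rw [integral_mul_const, mul_assoc, ← charFun_apply]
  · refine ((integrable_conj_charFun_mul hp μ').comp_snd μ).bdd_mul (c := 1) (by fun_prop)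
      (ae_of_all _ fun z => ?_)
    simp [norm_exp_ofReal_mul_I]

include hp in
lemma integrable_re_charFun_mul_conj_charFun_mul (μ μ' : Measure E) [IsFiniteMeasure μ]
    [IsFiniteMeasure μ'] :
    Integrable (fun t => (charFun μ t * conj (charFun μ' t)).re * p t) ν := by
  simpa only [RCLike.re_to_complex, re_mul_ofReal] using
    (integrable_charFun_mul_conj_charFun_mul hp μ μ').re

include hp hκ in
lemma integral_integral_kernel_sub_eq_integral_re_charFun_mul_conj [SFinite ν]
    (μ μ' : Measure E) [IsFiniteMeasure μ] [IsFiniteMeasure μ'] :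
    ∫ x, ∫ y, κ (x - y) ∂μ' ∂μ = ∫ t, (charFun μ t * conj (charFun μ' t)).re * p t ∂ν := by
  calc ∫ x, ∫ y, κ (x - y) ∂μ' ∂μ = (∫ x, ∫ y, (κ (x - y) : ℂ) ∂μ' ∂μ).re := by
        simp_rw [integral_complex_ofReal, ofReal_re]
    _ = (∫ t, charFun μ t * conj (charFun μ' t) * p t ∂ν).re := by
        rw [integral_integral_kernel_sub_eq_integral_charFun_mul_conj hp hκ μ μ']
    _ = ∫ t, (charFun μ t * conj (charFun μ' t)).re * p t ∂ν := by
        simp_rw [← re_mul_ofReal]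
        exact (integral_re (integrable_charFun_mul_conj_charFun_mul hp μ μ')).symm

end TranslationInvariantKernel

theorem mmd_sq_eq_integral_charFun_diff_general
    (P Q : Measure ℝ) [IsProbabilityMeasure P] [IsProbabilityMeasure Q]
    (κ p : ℝ → ℝ) (hpint : Integrable p volume)
    (hbochner : ∀ u : ℝ, (κ u : ℂ) = ∫ t : ℝ, Complex.exp (t * u * Complex.I) * p t ∂volume)
    (φP φQ : ℝ → ℂ)
    (hφP : ∀ t, φP t = ∫ x, Complex.exp (t * x * Complex.I) ∂P)
    (hφQ : ∀ t, φQ t = ∫ x, Complex.exp (t * x * Complex.I) ∂Q) :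
    (∫ x, ∫ y, κ (x - y) ∂P ∂P) - 2 * (∫ x, ∫ y, κ (x - y) ∂Q ∂P)
        + (∫ x, ∫ y, κ (x - y) ∂Q ∂Q)
      = ∫ t : ℝ, ‖φP t - φQ t‖ ^ 2 * p t ∂volume := by
  obtain rfl : φP = charFun P := funext fun t => (hφP t).trans (charFun_apply_real t).symm
  obtain rfl : φQ = charFun Q := funext fun t => (hφQ t).trans (charFun_apply_real t).symm
  have hκ (u : ℝ) : (κ u : ℂ) = ∫ t, exp (⟪u, t⟫ * I) * p t := by
    simp [hbochner]
  have hterm (μ μ' : Measure ℝ) [IsFiniteMeasure μ] [IsFiniteMeasure μ'] :=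
    integral_integral_kernel_sub_eq_integral_re_charFun_mul_conj hpint hκ μ μ'
  have hint (μ μ' : Measure ℝ) [IsFiniteMeasure μ] [IsFiniteMeasure μ'] :=
    integrable_re_charFun_mul_conj_charFun_mul hpint μ μ'
  have hpolar (t : ℝ) : ‖charFun P t - charFun Q t‖ ^ 2 * p t
      = (charFun P t * conj (charFun P t)).re * p t
        - 2 * ((charFun P t * conj (charFun Q t)).re * p t)
        + (charFun Q t * conj (charFun Q t)).re * p t := by
    rw [← normSq_eq_norm_sq, normSq_sub, mul_conj, mul_conj, ofReal_re, ofReal_re]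
    ring
  simp_rw [hpolar]
  rw [integral_add ?_ (hint Q Q), integral_sub (hint P P) ((hint P Q).const_mul 2),
    integral_const_mul, hterm, hterm, hterm]
  exact (hint P P).sub ((hint P Q).const_mul 2)

/-- Bochner-type representation of the MMD: for a translation-invariant kernel
`κ(x−y)` with nonnegative integrable spectral density `p` (so that
`κ(u) = ∫ exp(itu) p(t) dt`), and probability measures `P`, `Q` with integrable
characteristic functions `φ_P`, `φ_Q`,
`MMD²(P,Q) = ∫ |φ_P(t) − φ_Q(t)|² p(t) dt`. -/
theorem mmd_sq_eq_integral_charFun_diff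
    (P Q : Measure ℝ) [IsProbabilityMeasure P] [IsProbabilityMeasure Q]
    (κ p : ℝ → ℝ) (hp : ∀ t, 0 ≤ p t) (hpint : Integrable p volume)
    (hbochner : ∀ u : ℝ, (κ u : ℂ) = ∫ t : ℝ, Complex.exp (t * u * Complex.I) * p t ∂volume)
    (φP φQ : ℝ → ℂ)
    (hφP : ∀ t, φP t = ∫ x, Complex.exp (t * x * Complex.I) ∂P)
    (hφQ : ∀ t, φQ t = ∫ x, Complex.exp (t * x * Complex.I) ∂Q)
    (hφPint : Integrable φP volume) (hφQint : Integrable φQ volume) :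
    (∫ x, ∫ y, κ (x - y) ∂P ∂P) - 2 * (∫ x, ∫ y, κ (x - y) ∂Q ∂P)
        + (∫ x, ∫ y, κ (x - y) ∂Q ∂Q)
      = ∫ t : ℝ, ‖φP t - φQ t‖ ^ 2 * p t ∂volume :=
  mmd_sq_eq_integral_charFun_diff_general P Q κ p hpint hbochner φP φQ hφP hφQ
end
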